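/- Mass lower bound from concentration compactness plus interaction Morawetz bound gives a contradiction: Suppose u : ℝ × ℝ² × 𝕋 → ℂ satisfies: (a) conservation of mass m₀ = ∫|u(t)|²dxdy > 0; (b) there exists C₀ > 0 and a function x(t) such that ∫_{|x−x(t)|≤C₀} ‖u(t,x,·)‖²_{L²_y} dx ≥ m₀/2 for all t; (c) the Gagliardo–Nirenberg-type bound ∫_{|x−x(t)|≤C₀}‖u(t,x,·)‖²_{L²_y}dx ≲ C₀^{3/2} ‖|∇_x|^{1/2}(|u(t)|²)‖_{L²_{x,y}}; (d) the space-time bound ∫_{−T}^{T} ‖|∇_x|^{1/2}(|u(t)|²)‖²_{L²_{x,y}} dt ≤ B uniformly in T, for some finite B. Then u ≡ 0, i.e., m₀ = 0. -/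

import Mathlib

open MeasureTheory

noncomputable section

instance : Fact (0 < 2 * Real.pi) := ⟨Real.two_pi_pos⟩

abbrev E2 := EuclideanSpace ℝ (Fin 2)
abbrev T1 := AddCircle (2 * Real.pi)

/-- `‖|∇_x|^{1/2}(|u(t)|²)‖_{L²_{x,y}}`, expressed via Plancherel on the Fourier side:
the square root of `∫_𝕋 ∫_{ℝ²} |ξ| |𝓕_x(|u(t,·,y)|²)(ξ)|² dξ dy`. -/
noncomputable def halfDerivMassNorm (u : ℝ → E2 → T1 → ℂ) (t : ℝ) : ℝ :=
  Real.sqrt (∫ y : T1, ∫ ξ : E2,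
    ‖ξ‖ * ‖VectorFourier.fourierIntegral Real.fourierChar volume (innerₗ E2)
      (fun x : E2 => ((‖u t x y‖ ^ 2 : ℝ) : ℂ)) ξ‖ ^ 2)

/-! The concentration (b) and the Gagliardo–Nirenberg bound (c) give the pointwise lower bound
`m₀ / 2 ≤ K C₀^{3/2} ‖|∇_x|^{1/2}(|u(t)|²)‖` for every `t`. Squaring and integrating over
`(-T, T]` yields `(m₀ / 2)² · 2T ≤ (K C₀^{3/2})² B` by (d), which forces `m₀ = 0` as `T → ∞`. -/

open Set

theorem nonpos_of_forall_le_of_setIntegral_Ioc_le {g : ℝ → ℝ} {a B : ℝ}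
    (hle : ∀ t, a ≤ g t) (hint : ∀ T, IntegrableOn g (Ioc (-T) T))
    (hB : ∀ T, ∫ t in Ioc (-T) T, g t ≤ B) : a ≤ 0 := by
  have hlin : ∀ T, 0 ≤ T → 2 * T * a ≤ B := fun T hT =>
    calc 2 * T * a = ∫ _ in Ioc (-T) T, a := by
          rw [setIntegral_const, Real.volume_real_Ioc_of_le (by linarith), smul_eq_mul]
          ring
      _ ≤ ∫ t in Ioc (-T) T, g t :=
          setIntegral_mono (integrableOn_const measure_Ioc_lt_top.ne) (hint T) hle
      _ ≤ B := hB T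
  by_contra! ha
  have h := hlin (|B| / a + 1) (by positivity)
  have hexpand : 2 * (|B| / a + 1) * a = 2 * |B| + 2 * a := by field_simp
  linarith [le_abs_self B, abs_nonneg B]

theorem sq_le_sq_mul_sq_of_le_mul {a D H : ℝ} (ha : 0 ≤ a) (h : a ≤ D * H) :
    a ^ 2 ≤ D ^ 2 * H ^ 2 := by
  rw [← mul_pow]
  exact pow_le_pow_left₀ ha h 2

theorem stmt11_general (u : ℝ → E2 → T1 → ℂ) (xc : ℝ → E2) (C₀ B m₀ K : ℝ)
    (hm₀ : 0 < m₀)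
    (hconc : ∀ t, m₀ / 2 ≤
      ∫ x in Metric.closedBall (xc t) C₀, ∫ y : T1, ‖u t x y‖ ^ 2)
    (hGN : ∀ t, (∫ x in Metric.closedBall (xc t) C₀, ∫ y : T1, ‖u t x y‖ ^ 2)
      ≤ K * C₀ ^ (3 / 2 : ℝ) * halfDerivMassNorm u t)
    (hint : ∀ T : ℝ, IntegrableOn (fun t => (halfDerivMassNorm u t) ^ 2) (Set.Ioc (-T) T))
    (hB : ∀ T : ℝ, (∫ t in Set.Ioc (-T) T, (halfDerivMassNorm u t) ^ 2) ≤ B) :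
    m₀ = 0 := by
  set D := K * C₀ ^ (3 / 2 : ℝ)
  have hlower : ∀ t, (m₀ / 2) ^ 2 ≤ D ^ 2 * halfDerivMassNorm u t ^ 2 := fun t =>
    sq_le_sq_mul_sq_of_le_mul (half_pos hm₀).le ((hconc t).trans (hGN t))
  have hnonpos : (m₀ / 2) ^ 2 ≤ 0 :=
    nonpos_of_forall_le_of_setIntegral_Ioc_le hlower (fun T => (hint T).const_mul _)
      fun T => by
        rw [integral_const_mul]
        exact mul_le_mul_of_nonneg_left (hB T) (sq_nonneg D)
  exact absurd hnonpos (not_le.mpr (by positivity))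

/-- Rigidity: a solution with conserved positive mass `m₀`, localized mass concentration
(b), the Gagliardo–Nirenberg bound (c), and the uniform interaction Morawetz space-time
bound (d) must vanish: `m₀ = 0` (a contradiction with `m₀ > 0`, so no such almost-periodic
solution exists). -/
theorem stmt11 (u : ℝ → E2 → T1 → ℂ) (xc : ℝ → E2) (C₀ B m₀ K : ℝ)
    (hC₀ : 0 < C₀) (hm₀ : 0 < m₀) (hK : 0 < K)
    (hmass : ∀ t, (∫ x : E2, ∫ y : T1, ‖u t x y‖ ^ 2) = m₀)
    (hconc : ∀ t, m₀ / 2 ≤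
      ∫ x in Metric.closedBall (xc t) C₀, ∫ y : T1, ‖u t x y‖ ^ 2)
    (hGN : ∀ t, (∫ x in Metric.closedBall (xc t) C₀, ∫ y : T1, ‖u t x y‖ ^ 2)
      ≤ K * C₀ ^ (3 / 2 : ℝ) * halfDerivMassNorm u t)
    (hint : ∀ T : ℝ, IntegrableOn (fun t => (halfDerivMassNorm u t) ^ 2) (Set.Ioc (-T) T))
    (hB : ∀ T : ℝ, (∫ t in Set.Ioc (-T) T, (halfDerivMassNorm u t) ^ 2) ≤ B) :
    m₀ = 0 :=
  stmt11_general u xc C₀ B m₀ K hm₀ hconc hGN hint hB
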